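/- arXiv:2112.13493 — 2 statements merged into one kernel-verified Lean document; each statement's English description precedes it below -/
import Mathlib

section
/- Let f : 𝕆 → 𝕆 be a real-linear map on the octonions satisfying f(x·q) = q·f(x) for all octonions q and x. Then f = 0. -/
noncomputable section

/-- The octonions, realized as the Cayley–Dickson double of the quaternions. -/
abbrev 𝕆 : Type := Quaternion ℝ × Quaternion ℝ

/-- Octonion multiplication via the Cayley–Dickson formula
`(a,b)(c,d) = (ac - d̄b, da + bc̄)`. -/
def omul (x y : 𝕆) : 𝕆 :=
  (x.1 * y.1 - star y.2 * x.2, y.2 * x.1 + x.2 * star y.1)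

/-- Octonionic conjugation. -/
def oconj (x : 𝕆) : 𝕆 := (star x.1, -x.2)

/-- The octonion `1`. -/
def oone : 𝕆 := (1, 0)

/-- Real part of an octonion. -/
def ore (x : 𝕆) : ℝ := x.1.re

/-- Embedding of the reals into the octonions. -/
def oreal (r : ℝ) : 𝕆 := ((r : Quaternion ℝ), 0)

/-- Squared norm of an octonion. -/
def onormSq (x : 𝕆) : ℝ := ore (omul x (oconj x))

/-
Writing `c = f 1`, equivariance gives `f q = q c`, so `(x q) c = q (x c)` for all `x, q`.
Testing this with `x, q` in the quaternion subalgebra `ℍ × 0` gives `[x, q] c₁ = 0`, and with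
`x = (0, 1)` (once `c₁ = 0`) it gives `c̄₂ q̄ = q c̄₂`, which forces `[u, v] c̄₂ = 0`. As `ℍ` is a noncommutative
division ring, both components of `c` vanish.
-/

theorem eq_zero_of_mul_mul_eq_mul_mul {R : Type*} [Ring R] [NoZeroDivisors R] {u v w : R}
    (huv : u * v ≠ v * u) (h : u * v * w = v * u * w) : w = 0 :=
  (mul_eq_zero.mp (sub_mul (u * v) (v * u) w ▸ sub_eq_zero.mpr h)).resolve_left
    (sub_ne_zero.mpr huv)

theorem eq_zero_of_forall_mul_star_eq_mul {R : Type*} [Ring R] [StarRing R] [NoZeroDivisors R]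
    {u v w : R} (huv : u * v ≠ v * u) (hw : ∀ q, w * star q = q * w) : w = 0 := by
  refine eq_zero_of_mul_mul_eq_mul_mul huv ?_
  calc u * v * w = u * (w * star v) := by rw [mul_assoc, hw]
    _ = w * star (v * u) := by rw [← mul_assoc, ← hw, star_mul, mul_assoc]
    _ = v * u * w := hw _

theorem Quaternion.exists_mul_ne_mul : ∃ u v : Quaternion ℝ, u * v ≠ v * u := by
  let u : Quaternion ℝ := ⟨0, 1, 0, 0⟩
  let v : Quaternion ℝ := ⟨0, 0, 1, 0⟩
  refine ⟨u, v, fun h => ?_⟩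
  have huv := congrArg (·.imK) h
  simp only [Quaternion.imK_mul] at huv
  norm_num [u, v] at huv

theorem omul_oone_left (q : 𝕆) : omul oone q = q := by
  simp [omul, oone]

theorem omul_zero_right (x : 𝕆) : omul x 0 = 0 := by
  simp [omul]

theorem eq_zero_of_forall_omul_omul_eq {c : 𝕆}
    (h : ∀ x q : 𝕆, omul (omul x q) c = omul q (omul x c)) : c = 0 := by
  obtain ⟨a, b⟩ := c
  obtain ⟨u, v, huv⟩ := Quaternion.exists_mul_ne_mul
  obtain rfl : a = 0 := eq_zero_of_mul_mul_eq_mul_mul huv <| by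
    simpa [omul, mul_assoc] using congrArg Prod.fst (h (u, 0) (v, 0))
  have hb : star b = 0 := eq_zero_of_forall_mul_star_eq_mul huv fun q => by
    simpa [omul] using congrArg Prod.fst (h (0, 1) (q, 0))
  simpa using hb

/-- Any real-linear map f on the octonions with f(x*q) = q*f(x) is zero. -/
theorem stmt_1 (f : 𝕆 →ₗ[ℝ] 𝕆)
    (hf : ∀ q x : 𝕆, f (omul x q) = omul q (f x)) :
    f = 0 := by
  have hfq : ∀ q, f q = omul q (f oone) := fun q =>
    (congrArg f (omul_oone_left q)).symm.trans (hf q oone)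
  have hc : f oone = 0 := eq_zero_of_forall_omul_omul_eq fun x q => by
    rw [← hfq, ← hfq x, hf]
  refine LinearMap.ext fun x => ?_
  rw [hfq x, hc, omul_zero_right, LinearMap.zero_apply]
end
end

section
/- In a pre-Hilbert left 𝕆-module H, for all u, v ∈ H and p ∈ 𝕆 the second associator is antisymmetric: [p,v,u] = −[p,u,v], where [p,u,v] := ⟨p·u, v⟩ − p·⟨u, v⟩. -/
noncomputable section

/-- A pre-Hilbert left `𝕆`-module: a real vector space `H` with an `ℝ`-linear
left `𝕆`-scalar multiplication `sm` satisfying `1·x = x` and the alternating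
left-associator law, together with an `ℝ`-bilinear `𝕆`-valued inner product `inn`
which is `𝕆`-para-linear, hermitian and positive definite. -/
structure PreHilbO (H : Type*) [AddCommGroup H] [Module ℝ H] where
  sm : 𝕆 →ₗ[ℝ] H →ₗ[ℝ] H
  inn : H →ₗ[ℝ] H →ₗ[ℝ] 𝕆
  one_sm : ∀ x : H, sm oone x = x
  alt : ∀ (p q : 𝕆) (x : H),
    sm (omul p q) x - sm p (sm q x) = -(sm (omul q p) x - sm q (sm p x))
  para : ∀ (p : 𝕆) (u v : H), ore (inn (sm p u) v - omul p (inn u v)) = 0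
  herm : ∀ u v : H, inn u v = oconj (inn v u)
  pos : ∀ u : H, ∃ r : ℝ, 0 ≤ r ∧ inn u u = oreal r
  posdef : ∀ u : H, inn u u = 0 → u = 0

/-! Since `x ↦ Re (q x)` for `q ∈ 𝕆` separates octonions, and `Re (q (p c)) = Re ((q p) c)`,
it suffices to show `S(p,q) := Re (q ⟨p u, v⟩) + Re (q ⟨p v, u⟩) = 2 Re ⟨u,v⟩ Re (q p)`.
Para-linearity and hermitian symmetry move `q` and then `p` across the inner product,
`Re (q ⟨p u, v⟩) = Re ⟨p̄ (q̄ v), u⟩`, so `S(p,q) = Re ⟨p̄ (q̄ v) + q (p v), u⟩`, which is symmetric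
in `p, q` because `p̄ = 2 Re p - p`. On the other hand the alternating law
`q (p x) + p (q x) = (q p) x + (p q) x` computes `S(p,q) + S(q,p) = 4 Re ⟨u,v⟩ Re (q p)`. -/

open Quaternion

lemma ore_add (x y : 𝕆) : ore (x + y) = ore x + ore y := rfl

lemma ore_sub (x y : 𝕆) : ore (x - y) = ore x - ore y := rfl

lemma ore_oconj (x : 𝕆) : ore (oconj x) = ore x := by
  simp [ore, oconj]

lemma omul_add_right (p x y : 𝕆) : omul p (x + y) = omul p x + omul p y := by
  simp only [omul, Prod.fst_add, Prod.snd_add, star_add, Prod.mk_add_mk, Prod.ext_iff,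
    mul_add, add_mul]
  constructor <;> abel

lemma omul_sub_right (p x y : 𝕆) : omul p (x - y) = omul p x - omul p y := by
  simp only [omul, Prod.fst_sub, Prod.snd_sub, star_sub, Prod.mk_sub_mk, Prod.ext_iff,
    mul_sub, sub_mul]
  constructor <;> abel

lemma oconj_omul (x y : 𝕆) : oconj (omul x y) = omul (oconj y) (oconj x) := by
  simp [oconj, omul]

lemma oconj_eq_oreal_sub (x : 𝕆) : oconj x = oreal (2 * ore x) - x :=
  Prod.ext (star_eq_two_re_sub x.1) (zero_sub x.2).symm

lemma oreal_eq_smul_oone (r : ℝ) : oreal r = r • oone := by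
  ext <;> simp [oreal, oone]

lemma ore_omul_comm (x y : 𝕆) : ore (omul x y) = ore (omul y x) := by
  simp only [ore, omul, re_sub, re_mul, re_star, imI_star, neg_mul, sub_neg_eq_add, imJ_star,
    imK_star]
  ring

lemma ore_omul_assoc (x y z : 𝕆) : ore (omul x (omul y z)) = ore (omul (omul x y) z) := by
  simp only [ore, omul, star_add, star_mul, star_star, star_sub, re_sub, re_mul, re_star, imI_star,
    neg_mul, sub_neg_eq_add, imJ_star, imK_star, imI_sub, imI_mul, imJ_sub, imJ_mul, imK_sub, imK_mul,
    re_add, mul_neg, neg_neg, imI_add, imJ_add, imK_add]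
  ring

lemma ore_omul_oreal (x : 𝕆) (r : ℝ) : ore (omul x (oreal r)) = r * ore x := by
  simp only [ore, omul, oreal, star_zero, zero_mul, sub_zero, star_coe, zero_add, re_mul, re_coe,
    imI_coe, mul_zero, imJ_coe, imK_coe]
  ring

lemma ore_omul_oconj_self (x : 𝕆) : ore (omul (oconj x) x) = normSq x.1 + normSq x.2 := by
  simp [omul, oconj, ore, star_mul_self]

lemma eq_zero_of_forall_ore_omul_eq_zero (x : 𝕆) (hx : ∀ q, ore (omul q x) = 0) : x = 0 := by
  have h := hx (oconj x)
  rw [ore_omul_oconj_self] at h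
  have h₁ : normSq x.1 = 0 := by linarith [normSq_nonneg (a := x.1), normSq_nonneg (a := x.2)]
  have h₂ : normSq x.2 = 0 := by linarith [normSq_nonneg (a := x.1), normSq_nonneg (a := x.2)]
  exact Prod.ext (normSq_eq_zero.mp h₁) (normSq_eq_zero.mp h₂)

namespace PreHilbO

variable {H : Type*} [AddCommGroup H] [Module ℝ H] (h : PreHilbO H)

lemma ore_inn_sm (p : 𝕆) (a b : H) : ore (h.inn (h.sm p a) b) = ore (omul p (h.inn a b)) :=
  sub_eq_zero.mp (h.para p a b)

lemma ore_inn_comm (a b : H) : ore (h.inn a b) = ore (h.inn b a) := by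
  rw [h.herm a b, ore_oconj]

lemma inn_add_inn_swap (a b : H) : h.inn a b + h.inn b a = oreal (2 * ore (h.inn a b)) := by
  rw [h.herm b a, oconj_eq_oreal_sub, add_sub_cancel]

lemma ore_omul_inn (q : 𝕆) (a b : H) :
    ore (omul q (h.inn a b)) = ore (h.inn (h.sm (oconj q) b) a) := by
  rw [ore_inn_sm, h.herm b a, ← oconj_omul, ore_oconj]
  exact ore_omul_comm _ _

lemma sm_oreal (r : ℝ) (x : H) : h.sm (oreal r) x = r • x := by
  rw [oreal_eq_smul_oone, map_smul, LinearMap.smul_apply, h.one_sm]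

lemma sm_oconj (p : 𝕆) (x : H) : h.sm (oconj p) x = (2 * ore p) • x - h.sm p x := by
  rw [oconj_eq_oreal_sub, map_sub, LinearMap.sub_apply, sm_oreal]

lemma sm_sm_add_sm_sm (p q : 𝕆) (x : H) :
    h.sm p (h.sm q x) + h.sm q (h.sm p x) = h.sm (omul p q) x + h.sm (omul q p) x := by
  linear_combination (norm := abel) -h.alt p q x

lemma sm_oconj_sm_oconj_add_sm_sm_comm (p q : 𝕆) (x : H) :
    h.sm (oconj p) (h.sm (oconj q) x) + h.sm q (h.sm p x)
      = h.sm (oconj q) (h.sm (oconj p) x) + h.sm p (h.sm q x) := by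
  simp only [sm_oconj, map_sub, map_smul, smul_sub, smul_smul]
  module

lemma ore_omul_inn_add_inn_swap (x : 𝕆) (a b : H) :
    ore (omul x (h.inn a b)) + ore (omul x (h.inn b a)) = 2 * ore (h.inn a b) * ore x := by
  rw [← ore_add, ← omul_add_right, inn_add_inn_swap, ore_omul_oreal]

lemma ore_omul_inn_sm (p q : 𝕆) (a b : H) :
    ore (omul q (h.inn (h.sm p a) b)) = ore (h.inn (h.sm (oconj p) (h.sm (oconj q) b)) a) := by
  rw [ore_omul_inn, ore_inn_comm, ore_inn_sm, ore_omul_inn]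

lemma ore_omul_inn_sm_add_swap_comm (p q : 𝕆) (u v : H) :
    ore (omul q (h.inn (h.sm p u) v)) + ore (omul q (h.inn (h.sm p v) u))
      = ore (omul p (h.inn (h.sm q u) v)) + ore (omul p (h.inn (h.sm q v) u)) := by
  have key : ∀ p q : 𝕆,
      ore (omul q (h.inn (h.sm p u) v)) + ore (omul q (h.inn (h.sm p v) u))
        = ore (h.inn (h.sm (oconj p) (h.sm (oconj q) v) + h.sm q (h.sm p v)) u) := by
    intro p q
    rw [map_add, LinearMap.add_apply, ore_add, ore_omul_inn_sm, ore_inn_sm h q]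
  rw [key, key, sm_oconj_sm_oconj_add_sm_sm_comm]

lemma ore_omul_inn_sm_add_ore_omul_inn_sm (p q : 𝕆) (a b : H) :
    ore (omul q (h.inn (h.sm p a) b)) + ore (omul p (h.inn (h.sm q a) b))
      = ore (omul (omul q p) (h.inn a b)) + ore (omul (omul p q) (h.inn a b)) := by
  calc _ = ore (h.inn (h.sm q (h.sm p a) + h.sm p (h.sm q a)) b) := by
        rw [map_add, LinearMap.add_apply, ore_add, ore_inn_sm, ore_inn_sm]
    _ = ore (h.inn (h.sm (omul q p) a + h.sm (omul p q) a) b) := by rw [sm_sm_add_sm_sm]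
    _ = _ := by rw [map_add, LinearMap.add_apply, ore_add, ore_inn_sm, ore_inn_sm]

lemma ore_omul_inn_sm_add_swap (p q : 𝕆) (u v : H) :
    ore (omul q (h.inn (h.sm p u) v)) + ore (omul q (h.inn (h.sm p v) u))
      = 2 * ore (h.inn u v) * ore (omul q p) := by
  have hcomm := h.ore_omul_inn_sm_add_swap_comm p q u v
  have huv := h.ore_omul_inn_sm_add_ore_omul_inn_sm p q u v
  have hvu := h.ore_omul_inn_sm_add_ore_omul_inn_sm p q v u
  have hqp := h.ore_omul_inn_add_inn_swap (omul q p) u v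
  have hpq := h.ore_omul_inn_add_inn_swap (omul p q) u v
  rw [ore_omul_comm p q] at hpq
  linarith

end PreHilbO

/-- In a pre-Hilbert left octonionic module the second associator is
antisymmetric in its last two arguments. -/
theorem stmt_3 {H : Type*} [AddCommGroup H] [Module ℝ H] (h : PreHilbO H)
    (p : 𝕆) (u v : H) :
    h.inn (h.sm p v) u - omul p (h.inn v u)
      = -(h.inn (h.sm p u) v - omul p (h.inn u v)) := by
  refine eq_neg_of_add_eq_zero_left (eq_zero_of_forall_ore_omul_eq_zero _ fun q => ?_)
  rw [omul_add_right, omul_sub_right, omul_sub_right, ore_add, ore_sub, ore_sub,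
    ore_omul_assoc q p, ore_omul_assoc q p]
  have hsm := h.ore_omul_inn_sm_add_swap p q u v
  have hinn := h.ore_omul_inn_add_inn_swap (omul q p) u v
  linarith
end
end
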